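/- Let n ≥ 2 and suppose τ ∈ S_n satisfies condition (C). Then the incidence graph of the complete simple graph K_n on n vertices is isomorphic to the coset graph of (⟨σ,τ⟩, {σ,τ}), where ⟨σ,τ⟩ is the subgroup of S_n generated by σ and τ and the right cosets are taken inside ⟨σ,τ⟩. -/

import Mathlib

set_option linter.unusedSectionVars false
def sigmaFun (n k : ℕ) : ℕ :=
  if 1 ≤ k ∧ k ≤ n - 2 then k + 1 else if k = n - 1 then 1 else k

section
variable {n : ℕ} (hn : 2 ≤ n) {σ : Equiv.Perm ℕ} (hσ : ∀ k, σ k = sigmaFun n k)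
include hn hσ

lemma sigma_fix_out : ∀ k, ¬(1 ≤ k ∧ k ≤ n - 1) → σ k = k := by
  intro k hk; rw [hσ, sigmaFun]
  rw [if_neg (by omega), if_neg (by omega)]

lemma sigma_mid : ∀ k, 1 ≤ k → k ≤ n - 2 → σ k = k + 1 := by
  intro k h1 h2; rw [hσ, sigmaFun, if_pos ⟨h1, h2⟩]

lemma sigma_top : σ (n - 1) = 1 := by
  rw [hσ, sigmaFun, if_neg (by omega), if_pos rfl]

lemma sigma_fix_n : σ n = n := by
  apply sigma_fix_out hn hσ; omega

/-- moving up within the cycle -/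
lemma sigma_pow_shift : ∀ m x : ℕ, 1 ≤ x → x + m ≤ n - 1 → (σ ^ m) x = x + m := by
  intro m
  induction m with
  | zero => intro x h1 h2; simp
  | succ m ih =>
    intro x h1 h2
    rw [pow_succ', Equiv.Perm.mul_apply, ih x h1 (by omega),
      sigma_mid hn hσ (x + m) (by omega) (by omega)]
    omega

lemma sigma_pow_cycle : ∀ v, 1 ≤ v → v ≤ n - 1 → (σ ^ v) (n - 1) = v := by
  intro v h1 h2
  have : σ ^ v = σ ^ (v - 1) * σ ^ 1 := by rw [← pow_add]; congr 1; omega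
  rw [this, Equiv.Perm.mul_apply, pow_one, sigma_top hn hσ,
    sigma_pow_shift hn hσ (v-1) 1 le_rfl (by omega)]
  omega

lemma sigma_pow_card : σ ^ (n - 1) = 1 := by
  ext k
  rcases Classical.em (1 ≤ k ∧ k ≤ n - 1) with hk | hk
  · have hsplit : σ ^ (n - 1) = σ ^ (k - 1) * (σ ^ 1 * σ ^ (n - 1 - k)) := by
      rw [← pow_add, ← pow_add]; congr 1; omega
    rw [hsplit, Equiv.Perm.mul_apply, Equiv.Perm.mul_apply,
      sigma_pow_shift hn hσ (n - 1 - k) k hk.1 (by omega), pow_one]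
    have : k + (n - 1 - k) = n - 1 := by omega
    rw [this, sigma_top hn hσ, sigma_pow_shift hn hσ (k-1) 1 le_rfl (by omega)]
    simp; omega
  · simp [Equiv.Perm.pow_apply_eq_self_of_apply_eq_self (sigma_fix_out hn hσ k hk)]

lemma sigma_zpow_reduce : ∀ a : ℤ, ∃ e : ℕ, e ≤ n - 2 ∧ σ ^ a = σ ^ e := by
  intro a
  have h1 : (0:ℤ) < (n:ℤ) - 1 := by omega
  refine ⟨(a % ((n:ℤ) - 1)).toNat, ?_, ?_⟩
  · have := Int.emod_lt_of_pos a h1; have := Int.emod_nonneg a (by omega : ((n:ℤ)-1) ≠ 0); omega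
  · have hmod : a = ((n:ℤ) - 1) * (a / ((n:ℤ)-1)) + a % ((n:ℤ)-1) := (Int.mul_ediv_add_emod a _).symm
    have hnn : (0:ℤ) ≤ a % ((n:ℤ)-1) := Int.emod_nonneg a (by omega)
    calc σ ^ a = σ ^ (((n:ℤ) - 1) * (a / ((n:ℤ)-1)) + a % ((n:ℤ)-1)) := by rw [← hmod]
    _ = (σ ^ ((n:ℤ)-1)) ^ (a / ((n:ℤ)-1)) * σ ^ (a % ((n:ℤ)-1)) := by
        rw [zpow_add, zpow_mul]
    _ = σ ^ (a % ((n:ℤ)-1)) := by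
        have : ((n:ℤ) - 1) = ((n - 1 : ℕ) : ℤ) := by omega
        rw [this, zpow_natCast, sigma_pow_card hn hσ]; simp
    _ = σ ^ (a % ((n:ℤ)-1)).toNat := by
        rw [← zpow_natCast]; congr 1; omega

end

def rhoFun (n k : ℕ) : ℕ :=
  if 1 ≤ k ∧ k ≤ n - 2 then n - 1 - k
  else if k = n - 1 then n else if k = n then n - 1 else k

def ConditionC (n : ℕ) (σ ρ τ : Equiv.Perm ℕ) : Prop :=
  orderOf τ = 2 ∧ τ n = n - 1 ∧ (∀ k : ℕ, k = 0 ∨ n < k → τ k = k) ∧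
  ∀ k : ℕ, 1 ≤ k → k ≤ n - 2 →
    τ * σ ^ k * τ = σ ^ (τ k) * τ * σ ^ (τ (ρ (τ k)))

/-- a permutation fixing the complement of a set maps the set into itself -/
lemma perm_maps (g : Equiv.Perm ℕ) (m : ℕ) (h : ∀ k, ¬(1 ≤ k ∧ k ≤ m) → g k = k) :
    ∀ k, 1 ≤ k → k ≤ m → 1 ≤ g k ∧ g k ≤ m := by
  intro k h1 h2
  by_contra hc
  have h3 : g (g k) = g k := h (g k) (by omega)
  have := g.injective h3
  omega

section
variable {n : ℕ} (hn : 2 ≤ n) {σ ρ τ : Equiv.Perm ℕ}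
  (hσ : ∀ k, σ k = sigmaFun n k) (hC : ConditionC n σ ρ τ)
include hn hσ hC

lemma tau_sq : τ * τ = 1 := by
  have := pow_orderOf_eq_one τ
  rw [hC.1, pow_two] at this; exact this

lemma tau_tau : ∀ k, τ (τ k) = k := by
  intro k
  have := tau_sq hn hσ hC
  calc τ (τ k) = (τ * τ) k := rfl
  _ = k := by rw [this]; rfl

lemma tau_inv : τ⁻¹ = τ := by
  rw [eq_comm, eq_inv_iff_mul_eq_one, tau_sq hn hσ hC]

lemma tau_n : τ n = n - 1 := hC.2.1

lemma tau_n1 : τ (n - 1) = n := by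
  have := tau_tau hn hσ hC n
  rw [tau_n hn hσ hC] at this; exact this

lemma tau_fix_out : ∀ k, ¬(1 ≤ k ∧ k ≤ n) → τ k = k := by
  intro k hk; exact hC.2.2.1 k (by omega)

lemma tau_range : ∀ k, 1 ≤ k → k ≤ n → 1 ≤ τ k ∧ τ k ≤ n :=
  perm_maps τ n (tau_fix_out hn hσ hC)

lemma tau_mid : ∀ k, 1 ≤ k → k ≤ n - 2 → 1 ≤ τ k ∧ τ k ≤ n - 2 := by
  intro k h1 h2
  have h3 := tau_range hn hσ hC k h1 (by omega)
  have h4 : τ k ≠ n - 1 := by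
    intro h; have := tau_tau hn hσ hC k
    rw [h, tau_n1 hn hσ hC] at this; omega
  have h5 : τ k ≠ n := by
    intro h; have := tau_tau hn hσ hC k
    rw [h, tau_n hn hσ hC] at this; omega
  omega

/-- the key rewriting lemma from condition (C) -/
lemma key_reduce : ∀ c : ℤ, (∃ u : ℤ, τ * σ ^ c * τ = σ ^ u) ∨
    (∃ u v : ℤ, τ * σ ^ c * τ = σ ^ u * τ * σ ^ v) := by
  intro c
  obtain ⟨e, he, hee⟩ := sigma_zpow_reduce hn hσ c
  rcases Nat.eq_zero_or_pos e with h0 | h0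
  · left; refine ⟨0, ?_⟩
    rw [hee, h0, pow_zero, mul_one, tau_sq hn hσ hC, zpow_zero]
  · right
    refine ⟨(τ e : ℤ), (τ (ρ (τ e)) : ℤ), ?_⟩
    rw [hee, zpow_natCast, zpow_natCast, hC.2.2.2 e h0 he]

lemma structureG : ∀ g ∈ Subgroup.closure ({σ, τ} : Set (Equiv.Perm ℕ)),
    (∃ a : ℤ, g = σ ^ a) ∨ (∃ a b : ℤ, g = σ ^ a * τ * σ ^ b) := by
  intro g hg
  induction hg using Subgroup.closure_induction with
  | mem x hx =>
    rcases hx with h | h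
    · left; exact ⟨1, by rw [h, zpow_one]⟩
    · right; exact ⟨0, 0, by simp at h; rw [h]; simp⟩
  | one => left; exact ⟨0, by simp⟩
  | mul x y hx hy ihx ihy =>
    rcases ihx with ⟨a, rfl⟩ | ⟨a, b, rfl⟩ <;> rcases ihy with ⟨c, rfl⟩ | ⟨c, d, rfl⟩
    · left; exact ⟨a + c, by rw [zpow_add]⟩
    · right; exact ⟨a + c, d, by rw [zpow_add]; group⟩
    · right; exact ⟨a, b + c, by rw [zpow_add]; group⟩
    · rcases key_reduce hn hσ hC (b + c) with ⟨u, hu⟩ | ⟨u, v, hv⟩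
      · left
        refine ⟨a + u + d, ?_⟩
        have : σ ^ a * τ * σ ^ b * (σ ^ c * τ * σ ^ d)
            = σ ^ a * (τ * σ ^ (b + c) * τ) * σ ^ d := by rw [zpow_add]; group
        rw [this, hu, ← zpow_add, ← zpow_add]
      · right
        refine ⟨a + u, v + d, ?_⟩
        have : σ ^ a * τ * σ ^ b * (σ ^ c * τ * σ ^ d)
            = σ ^ a * (τ * σ ^ (b + c) * τ) * σ ^ d := by rw [zpow_add]; group
        rw [this, hv, zpow_add, zpow_add]; group
  | inv x hx ih =>
    rcases ih with ⟨a, rfl⟩ | ⟨a, b, rfl⟩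
    · left; exact ⟨-a, by rw [zpow_neg]⟩
    · right
      refine ⟨-b, -a, ?_⟩
      rw [mul_inv_rev, mul_inv_rev, tau_inv hn hσ hC, zpow_neg, zpow_neg]
      group

end

section
variable {n : ℕ} (hn : 2 ≤ n) {σ ρ τ : Equiv.Perm ℕ}
  (hσ : ∀ k, σ k = sigmaFun n k) (hC : ConditionC n σ ρ τ)
include hn hσ hC

lemma sigma_zpow_fix_out : ∀ (a : ℤ) k, ¬(1 ≤ k ∧ k ≤ n - 1) → (σ ^ a) k = k := by
  intro a k hk
  exact Equiv.Perm.zpow_apply_eq_self_of_apply_eq_self (sigma_fix_out hn hσ k hk) a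

lemma sigma_zpow_n : ∀ a : ℤ, (σ ^ a) n = n := by
  intro a; exact sigma_zpow_fix_out hn hσ hC a n (by omega)

lemma sigma_zpow_range : ∀ (a : ℤ) k, 1 ≤ k → k ≤ n - 1 → 1 ≤ (σ ^ a) k ∧ (σ ^ a) k ≤ n - 1 := by
  intro a; exact perm_maps (σ ^ a) (n-1) (sigma_zpow_fix_out hn hσ hC a)

lemma sigma_zpow_cycle : ∀ v : ℕ, 1 ≤ v → v ≤ n - 1 → (σ ^ (v:ℤ)) (n - 1) = v := by
  intro v h1 h2; rw [zpow_natCast]; exact sigma_pow_cycle hn hσ v h1 h2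

lemma sigma_zpow_fix_n1 : ∀ a : ℤ, (σ ^ a) (n - 1) = n - 1 → σ ^ a = 1 := by
  intro a ha
  obtain ⟨e, he, hee⟩ := sigma_zpow_reduce hn hσ a
  rcases Nat.eq_zero_or_pos e with h0 | h0
  · rw [hee, h0, pow_zero]
  · exfalso
    rw [hee] at ha
    rw [sigma_pow_cycle hn hσ e h0 (by omega)] at ha
    omega

lemma stab_n : ∀ g ∈ Subgroup.closure ({σ, τ} : Set (Equiv.Perm ℕ)),
    g n = n → ∃ a : ℤ, g = σ ^ a := by
  intro g hg hgn
  rcases structureG hn hσ hC g hg with ⟨a, rfl⟩ | ⟨a, b, rfl⟩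
  · exact ⟨a, rfl⟩
  · exfalso
    have h1 : (σ ^ a * τ * σ ^ b) n = (σ ^ a) (n - 1) := by
      simp only [Equiv.Perm.mul_apply]
      rw [sigma_zpow_n hn hσ hC, tau_n hn hσ hC]
    have h2 := sigma_zpow_range hn hσ hC a (n-1) (by omega) le_rfl
    rw [hgn] at h1; omega

lemma stab_fix_both : ∀ g ∈ Subgroup.closure ({σ, τ} : Set (Equiv.Perm ℕ)),
    g n = n → g (n - 1) = n - 1 → g = 1 := by
  intro g hg h1 h2
  obtain ⟨a, rfl⟩ := stab_n hn hσ hC g hg h1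
  exact sigma_zpow_fix_n1 hn hσ hC a h2

lemma stab_pair : ∀ g ∈ Subgroup.closure ({σ, τ} : Set (Equiv.Perm ℕ)),
    g n = n - 1 → g (n - 1) = n → g = τ := by
  intro g hg h1 h2
  rcases structureG hn hσ hC g hg with ⟨a, rfl⟩ | ⟨a, b, rfl⟩
  · exfalso; rw [sigma_zpow_n hn hσ hC] at h1; omega
  · have ha : (σ ^ a) (n - 1) = n - 1 := by
      have : (σ ^ a * τ * σ ^ b) n = (σ ^ a) (n - 1) := by
        simp only [Equiv.Perm.mul_apply]
        rw [sigma_zpow_n hn hσ hC, tau_n hn hσ hC]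
      rw [h1] at this; exact this.symm
    have ha1 : σ ^ a = 1 := sigma_zpow_fix_n1 hn hσ hC a ha
    have hb : (σ ^ b) (n - 1) = n - 1 := by
      have h3 : (σ ^ a * τ * σ ^ b) (n - 1) = τ ((σ ^ b) (n-1)) := by
        simp only [Equiv.Perm.mul_apply]; rw [ha1]; rfl
      rw [h2] at h3
      have h4 := tau_tau hn hσ hC ((σ ^ b) (n-1))
      rw [← h3] at h4
      rw [← h4, tau_n hn hσ hC]
    have hb1 : σ ^ b = 1 := sigma_zpow_fix_n1 hn hσ hC b hb
    rw [ha1, hb1]; group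

lemma sig_mem : σ ∈ Subgroup.closure ({σ, τ} : Set (Equiv.Perm ℕ)) :=
  Subgroup.subset_closure (by simp)

lemma tau_mem : τ ∈ Subgroup.closure ({σ, τ} : Set (Equiv.Perm ℕ)) :=
  Subgroup.subset_closure (by simp)

lemma trans_point : ∀ v, 1 ≤ v → v ≤ n →
    ∃ g ∈ Subgroup.closure ({σ, τ} : Set (Equiv.Perm ℕ)), g⁻¹ n = v := by
  intro v h1 h2
  rcases Classical.em (v = n) with rfl | hv
  · exact ⟨1, Subgroup.one_mem _, rfl⟩
  · refine ⟨τ * σ ^ (-(v:ℤ)), ?_, ?_⟩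
    · exact Subgroup.mul_mem _ (tau_mem hn hσ hC) (Subgroup.zpow_mem _ (sig_mem hn hσ hC) _)
    · rw [mul_inv_rev, tau_inv hn hσ hC, ← zpow_neg, neg_neg]
      simp only [Equiv.Perm.mul_apply]
      rw [tau_n hn hσ hC, sigma_zpow_cycle hn hσ hC v h1 (by omega)]

lemma trans_pair : ∀ x y, 1 ≤ x → x ≤ n → 1 ≤ y → y ≤ n → x ≠ y →
    ∃ g ∈ Subgroup.closure ({σ, τ} : Set (Equiv.Perm ℕ)), g⁻¹ n = x ∧ g⁻¹ (n-1) = y := by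
  intro x y hx1 hx2 hy1 hy2 hxy
  rcases Classical.em (x = n) with rfl | hxn
  · refine ⟨σ ^ (-(y:ℤ)), Subgroup.zpow_mem _ (sig_mem hn hσ hC) _, ?_, ?_⟩
    · rw [← zpow_neg, neg_neg, sigma_zpow_n hn hσ hC]
    · rw [← zpow_neg, neg_neg, sigma_zpow_cycle hn hσ hC y hy1 (by omega)]
  rcases Classical.em (y = n) with rfl | hyn
  · refine ⟨(σ ^ (x:ℤ) * τ)⁻¹, ?_, ?_, ?_⟩
    · apply Subgroup.inv_mem
      exact Subgroup.mul_mem _ (Subgroup.zpow_mem _ (sig_mem hn hσ hC) _) (tau_mem hn hσ hC)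
    · rw [inv_inv]
      simp only [Equiv.Perm.mul_apply]
      rw [tau_n hn hσ hC, sigma_zpow_cycle hn hσ hC x hx1 (by omega)]
    · rw [inv_inv]
      simp only [Equiv.Perm.mul_apply]
      rw [tau_n1 hn hσ hC, sigma_zpow_n hn hσ hC]
  · -- x, y ≤ n - 1
    set z := (σ ^ (-(x:ℤ))) y with hz
    have hzr : 1 ≤ z ∧ z ≤ n - 1 := sigma_zpow_range hn hσ hC _ y hy1 (by omega)
    have hxz : (σ ^ (x:ℤ)) z = y := by
      rw [hz, ← Equiv.Perm.mul_apply, ← zpow_add]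
      simp
    have hzn1 : z ≠ n - 1 := by
      intro h; rw [h, sigma_zpow_cycle hn hσ hC x hx1 (by omega)] at hxz; omega
    have hw := tau_mid hn hσ hC z hzr.1 (by omega)
    refine ⟨(σ ^ (x:ℤ) * τ * σ ^ ((τ z : ℕ):ℤ))⁻¹, ?_, ?_, ?_⟩
    · apply Subgroup.inv_mem
      exact Subgroup.mul_mem _ (Subgroup.mul_mem _ (Subgroup.zpow_mem _ (sig_mem hn hσ hC) _)
        (tau_mem hn hσ hC)) (Subgroup.zpow_mem _ (sig_mem hn hσ hC) _)
    · rw [inv_inv]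
      simp only [Equiv.Perm.mul_apply]
      rw [sigma_zpow_n hn hσ hC, tau_n hn hσ hC, sigma_zpow_cycle hn hσ hC x hx1 (by omega)]
    · rw [inv_inv]
      simp only [Equiv.Perm.mul_apply]
      rw [sigma_zpow_cycle hn hσ hC (τ z) hw.1 (by omega), tau_tau hn hσ hC, hxz]

end

def rcoset {G : Type*} [Group G] (H : Subgroup G) (x : G) : Set G :=
  {g : G | ∃ h ∈ H, g = h * x}

lemma mem_rcoset_self {G : Type*} [Group G] (H : Subgroup G) (x : G) : x ∈ rcoset H x :=
  ⟨1, H.one_mem, (one_mul x).symm⟩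

lemma mem_rcoset_of_mul_inv_mem {G : Type*} [Group G] {H : Subgroup G} {x y : G}
    (h : x * y⁻¹ ∈ H) : x ∈ rcoset H y :=
  ⟨x * y⁻¹, h, by group⟩

lemma rcoset_eq_of_mem {G : Type*} [Group G] {H : Subgroup G} {x y : G}
    (h : y ∈ rcoset H x) : rcoset H y = rcoset H x := by
  obtain ⟨h0, hh0, rfl⟩ := h
  ext g
  constructor
  · rintro ⟨k, hk, rfl⟩
    exact ⟨k * h0, H.mul_mem hk hh0, by group⟩
  · rintro ⟨k, hk, rfl⟩
    exact ⟨k * h0⁻¹, H.mul_mem hk (H.inv_mem hh0), by group⟩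

lemma rcoset_eq_of_inter {G : Type*} [Group G] {H : Subgroup G} {x y : G}
    (h : (rcoset H x ∩ rcoset H y).Nonempty) : rcoset H x = rcoset H y := by
  obtain ⟨z, hz1, hz2⟩ := h
  rw [← rcoset_eq_of_mem hz1, rcoset_eq_of_mem hz2]

section
variable {n : ℕ} (hn : 2 ≤ n) {σ ρ τ : Equiv.Perm ℕ}
  (hσ : ∀ k, σ k = sigmaFun n k) (hC : ConditionC n σ ρ τ)
include hn hσ hC

lemma memG_fix_out : ∀ g ∈ Subgroup.closure ({σ, τ} : Set (Equiv.Perm ℕ)),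
    ∀ k, ¬(1 ≤ k ∧ k ≤ n) → g k = k := by
  intro g hg k hk
  rcases structureG hn hσ hC g hg with ⟨a, rfl⟩ | ⟨a, b, rfl⟩
  · exact sigma_zpow_fix_out hn hσ hC a k (by omega)
  · simp only [Equiv.Perm.mul_apply]
    rw [sigma_zpow_fix_out hn hσ hC b k (by omega), tau_fix_out hn hσ hC k hk,
      sigma_zpow_fix_out hn hσ hC a k (by omega)]

lemma memG_range : ∀ g ∈ Subgroup.closure ({σ, τ} : Set (Equiv.Perm ℕ)),
    ∀ k, 1 ≤ k → k ≤ n → 1 ≤ g k ∧ g k ≤ n := by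
  intro g hg
  exact perm_maps g n (memG_fix_out hn hσ hC g hg)

lemma tau_zpow : ∀ a : ℤ, τ ^ a = 1 ∨ τ ^ a = τ := by
  intro a
  have h2 : τ ^ (2:ℤ) = 1 := by
    rw [show (2:ℤ) = (2:ℕ) by norm_num, zpow_natCast, pow_two, tau_sq hn hσ hC]
  rcases Int.even_or_odd a with ⟨k, hk⟩ | ⟨k, hk⟩
  · left; rw [hk, show k + k = 2 * k by ring, zpow_mul, h2, one_zpow]
  · right; rw [hk, zpow_add, zpow_mul, h2, one_zpow, zpow_one, one_mul]

end

def GVert {G : Type*} [Group G] (S : Set G) : Type _ :=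
  {p : G × Set G // p.1 ∈ S ∧ ∃ x : G, p.2 = rcoset (Subgroup.zpowers p.1) x}

def cosetGraph {G : Type*} [Group G] (S : Set G) : SimpleGraph (GVert S) :=
  SimpleGraph.fromRel fun u v => (u.1.2 ∩ v.1.2).Nonempty

def incidenceGraph {V : Type*} (Γ : SimpleGraph V) : SimpleGraph (V ⊕ Γ.edgeSet) :=
  SimpleGraph.fromRel fun x y =>
    ∃ (v : V) (a : Γ.edgeSet), x = Sum.inl v ∧ y = Sum.inr a ∧ v ∈ (a : Sym2 V)

/-- the vertex `s ∈ S` together with coset `⟨s⟩g`, as a vertex of the coset graph -/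
def cVert {G : Type*} [Group G] {S : Set G} {s : G} (hs : s ∈ S) (g : G) : GVert S :=
  ⟨(s, rcoset (Subgroup.zpowers s) g), hs, g, rfl⟩

lemma cVert_eq_iff {G : Type*} [Group G] {S : Set G} {s : G} (hs : s ∈ S) (g h : G) :
    cVert hs g = cVert hs h ↔
      rcoset (Subgroup.zpowers s) g = rcoset (Subgroup.zpowers s) h := by
  constructor
  · intro H; exact congrArg (fun u => u.1.2) H
  · intro H
    apply Subtype.ext
    show (s, rcoset (Subgroup.zpowers s) g) = (s, rcoset (Subgroup.zpowers s) h)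
    rw [H]

lemma cVert_ne {G : Type*} [Group G] {S : Set G} {s t : G} (hst : s ≠ t)
    (hs : s ∈ S) (ht : t ∈ S) (g h : G) : cVert hs g ≠ cVert ht h :=
  fun H => hst (congrArg (fun u => u.1.1) H)

lemma cVert_snd {G : Type*} [Group G] {S : Set G} {s : G} (hs : s ∈ S) (g : G) :
    (cVert hs g).1.2 = rcoset (Subgroup.zpowers s) g := rfl

lemma cVert_fst {G : Type*} [Group G] {S : Set G} {s : G} (hs : s ∈ S) (g : G) :
    (cVert hs g).1.1 = s := rfl

/-- `k ∈ {1,...,n}` corresponds to the element `k - 1` of `Fin n` -/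
def finOf (n : ℕ) (hn : 2 ≤ n) (k : ℕ) : Fin n := ⟨(k - 1) % n, Nat.mod_lt _ (by omega)⟩

lemma finOf_val {n : ℕ} (hn : 2 ≤ n) {k : ℕ} (h1 : 1 ≤ k) (h2 : k ≤ n) :
    (finOf n hn k).val = k - 1 := Nat.mod_eq_of_lt (by omega)

lemma finOf_inj {n : ℕ} (hn : 2 ≤ n) {k k' : ℕ} (h1 : 1 ≤ k) (h2 : k ≤ n)
    (h1' : 1 ≤ k') (h2' : k' ≤ n) (h : finOf n hn k = finOf n hn k') : k = k' := by
  have := congrArg Fin.val h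
  rw [finOf_val hn h1 h2, finOf_val hn h1' h2'] at this
  omega

lemma finOf_succ {n : ℕ} (hn : 2 ≤ n) (v : Fin n) : finOf n hn (v.val + 1) = v := by
  apply Fin.ext
  rw [finOf_val hn (by omega) (by omega : v.val + 1 ≤ n)]
  omega

/-- the edge associated to a group element -/
def feD (n : ℕ) (hn : 2 ≤ n) (g : Equiv.Perm ℕ) : Sym2 (Fin n) :=
  s(finOf n hn (g⁻¹ n), finOf n hn (g⁻¹ (n - 1)))

/-- If `τ ∈ S_n` satisfies condition (C), then the incidence graph of the complete graph
`K_n` is isomorphic to the coset graph of `(⟨σ,τ⟩, {σ,τ})`, with right cosets taken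
inside `⟨σ,τ⟩`. -/
theorem incidenceGraph_complete_iso_cosetGraph (n : ℕ) (hn : 2 ≤ n)
    (σ ρ τ : Equiv.Perm ℕ)
    (hσ : ∀ k, σ k = sigmaFun n k) (hρ : ∀ k, ρ k = rhoFun n k)
    (hC : ConditionC n σ ρ τ)
    (σ' τ' : Subgroup.closure ({σ, τ} : Set (Equiv.Perm ℕ)))
    (hσ' : (σ' : Equiv.Perm ℕ) = σ) (hτ' : (τ' : Equiv.Perm ℕ) = τ) :
    Nonempty (incidenceGraph (SimpleGraph.completeGraph (Fin n)) ≃g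
      cosetGraph ({σ', τ'} : Set (Subgroup.closure ({σ, τ} : Set (Equiv.Perm ℕ))))) := by
  classical
  -- σ' and τ' are distinct
  have hne : σ' ≠ τ' := by
    intro h
    have h2 : σ = τ := hσ'.symm.trans ((congrArg Subtype.val h).trans hτ')
    have h3 := tau_n hn hσ hC
    rw [← h2, sigma_fix_n hn hσ] at h3
    omega
  have hsS : σ' ∈ ({σ', τ'} : Set (Subgroup.closure ({σ, τ} : Set (Equiv.Perm ℕ)))) := Set.mem_insert _ _
  have htS : τ' ∈ ({σ', τ'} : Set (Subgroup.closure ({σ, τ} : Set (Equiv.Perm ℕ)))) := Set.mem_insert_of_mem _ rfl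
  -- ranges
  have hr1 : ∀ g : Subgroup.closure ({σ, τ} : Set (Equiv.Perm ℕ)), 1 ≤ (g : Equiv.Perm ℕ)⁻¹ n ∧ (g : Equiv.Perm ℕ)⁻¹ n ≤ n := by
    intro g
    exact memG_range hn hσ hC _ (Subgroup.inv_mem _ g.2) n (by omega) le_rfl
  have hr2 : ∀ g : Subgroup.closure ({σ, τ} : Set (Equiv.Perm ℕ)), 1 ≤ (g : Equiv.Perm ℕ)⁻¹ (n-1) ∧ (g : Equiv.Perm ℕ)⁻¹ (n-1) ≤ n := by
    intro g
    exact memG_range hn hσ hC _ (Subgroup.inv_mem _ g.2) (n-1) (by omega) (by omega)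
  -- coercion into zpowers
  have hcz : ∀ (w : Subgroup.closure ({σ, τ} : Set (Equiv.Perm ℕ))) (a : ℤ), (w : Equiv.Perm ℕ) = σ ^ a → w ∈ Subgroup.zpowers σ' := by
    intro w a h
    rw [Subgroup.mem_zpowers_iff]
    exact ⟨a, Subtype.ext (by rw [SubgroupClass.coe_zpow, hσ', h])⟩
  -- the σ-coset determines the image of n
  have hA : ∀ g h : Subgroup.closure ({σ, τ} : Set (Equiv.Perm ℕ)), rcoset (Subgroup.zpowers σ') g = rcoset (Subgroup.zpowers σ') h →
      (g : Equiv.Perm ℕ)⁻¹ n = (h : Equiv.Perm ℕ)⁻¹ n := by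
    intro g h H
    have hg : g ∈ rcoset (Subgroup.zpowers σ') h := H ▸ mem_rcoset_self _ g
    obtain ⟨k, hk, hgk⟩ := hg
    obtain ⟨a, ha⟩ := Subgroup.mem_zpowers_iff.mp hk
    have hkc : (k : Equiv.Perm ℕ) = σ ^ a := by rw [← ha, SubgroupClass.coe_zpow, hσ']
    have hco : (g : Equiv.Perm ℕ) = σ ^ a * (h : Equiv.Perm ℕ) := by
      rw [hgk]; push_cast; rw [hkc]
    rw [hco, mul_inv_rev, Equiv.Perm.mul_apply, ← zpow_neg, sigma_zpow_n hn hσ hC]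
  -- equal images of n produce intersecting σ-cosets
  have hA' : ∀ g h : Subgroup.closure ({σ, τ} : Set (Equiv.Perm ℕ)), (g : Equiv.Perm ℕ)⁻¹ n = (h : Equiv.Perm ℕ)⁻¹ n →
      h ∈ rcoset (Subgroup.zpowers σ') g := by
    intro g h H
    have hco : ((h * g⁻¹ : _) : Equiv.Perm ℕ) = (h : Equiv.Perm ℕ) * (g : Equiv.Perm ℕ)⁻¹ := by
      push_cast; rfl
    have hw : ((h * g⁻¹ : _) : Equiv.Perm ℕ) n = n := by
      rw [hco, Equiv.Perm.mul_apply, H, ← Equiv.Perm.mul_apply, mul_inv_cancel, Equiv.Perm.one_apply]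
    obtain ⟨a, ha⟩ := stab_n hn hσ hC _ (h * g⁻¹).2 hw
    exact mem_rcoset_of_mul_inv_mem (hcz _ a ha)
  -- the τ-coset determines the edge
  have hB : ∀ g h : Subgroup.closure ({σ, τ} : Set (Equiv.Perm ℕ)), rcoset (Subgroup.zpowers τ') g = rcoset (Subgroup.zpowers τ') h →
      feD n hn g = feD n hn h := by
    intro g h H
    have hg : g ∈ rcoset (Subgroup.zpowers τ') h := H ▸ mem_rcoset_self _ g
    obtain ⟨k, hk, hgk⟩ := hg
    obtain ⟨a, ha⟩ := Subgroup.mem_zpowers_iff.mp hk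
    have hkc : (k : Equiv.Perm ℕ) = τ ^ a := by rw [← ha, SubgroupClass.coe_zpow, hτ']
    have hco : (g : Equiv.Perm ℕ)⁻¹ = (h : Equiv.Perm ℕ)⁻¹ * τ ^ (-a) := by
      rw [hgk]; push_cast; rw [hkc, mul_inv_rev, zpow_neg]
    rcases tau_zpow hn hσ hC (-a) with h1 | h1
    · have : (g : Equiv.Perm ℕ)⁻¹ = (h : Equiv.Perm ℕ)⁻¹ := by rw [hco, h1, mul_one]
      rw [feD, feD, this]
    · have e1 : (g : Equiv.Perm ℕ)⁻¹ n = (h : Equiv.Perm ℕ)⁻¹ (n - 1) := by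
        rw [hco, h1, Equiv.Perm.mul_apply, tau_n hn hσ hC]
      have e2 : (g : Equiv.Perm ℕ)⁻¹ (n - 1) = (h : Equiv.Perm ℕ)⁻¹ n := by
        rw [hco, h1, Equiv.Perm.mul_apply, tau_n1 hn hσ hC]
      rw [feD, feD, e1, e2, Sym2.eq_swap]
  -- equal edges produce equal τ-cosets
  have hB' : ∀ g h : Subgroup.closure ({σ, τ} : Set (Equiv.Perm ℕ)), feD n hn g = feD n hn h →
      rcoset (Subgroup.zpowers τ') g = rcoset (Subgroup.zpowers τ') h := by
    intro g h H
    rw [feD, feD, Sym2.eq_iff] at H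
    have hco : ((g * h⁻¹ : _) : Equiv.Perm ℕ) = (g : Equiv.Perm ℕ) * (h : Equiv.Perm ℕ)⁻¹ := by
      push_cast; rfl
    rcases H with ⟨h1, h2⟩ | ⟨h1, h2⟩
    · have e1 := finOf_inj hn (hr1 g).1 (hr1 g).2 (hr1 h).1 (hr1 h).2 h1
      have e2 := finOf_inj hn (hr2 g).1 (hr2 g).2 (hr2 h).1 (hr2 h).2 h2
      have hw1 : ((g * h⁻¹ : _) : Equiv.Perm ℕ) n = n := by
        rw [hco, Equiv.Perm.mul_apply, ← e1, ← Equiv.Perm.mul_apply, mul_inv_cancel, Equiv.Perm.one_apply]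
      have hw2 : ((g * h⁻¹ : _) : Equiv.Perm ℕ) (n - 1) = n - 1 := by
        rw [hco, Equiv.Perm.mul_apply, ← e2, ← Equiv.Perm.mul_apply, mul_inv_cancel, Equiv.Perm.one_apply]
      have h3 := stab_fix_both hn hσ hC _ (g * h⁻¹).2 hw1 hw2
      have h4 : g = h := by
        have h5 : g * h⁻¹ = 1 := Subtype.coe_injective (by
          show ((g * h⁻¹ : _) : Equiv.Perm ℕ) = ((1 : _) : Equiv.Perm ℕ)
          rw [h3])
        exact mul_inv_eq_one.mp h5
      rw [h4]
    · have e1 := finOf_inj hn (hr1 g).1 (hr1 g).2 (hr2 h).1 (hr2 h).2 h1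
      have e2 := finOf_inj hn (hr2 g).1 (hr2 g).2 (hr1 h).1 (hr1 h).2 h2
      have hw1 : ((g * h⁻¹ : _) : Equiv.Perm ℕ) n = n - 1 := by
        rw [hco, Equiv.Perm.mul_apply, ← e2, ← Equiv.Perm.mul_apply, mul_inv_cancel, Equiv.Perm.one_apply]
      have hw2 : ((g * h⁻¹ : _) : Equiv.Perm ℕ) (n - 1) = n := by
        rw [hco, Equiv.Perm.mul_apply, ← e1, ← Equiv.Perm.mul_apply, mul_inv_cancel, Equiv.Perm.one_apply]
      have h3 := stab_pair hn hσ hC _ (g * h⁻¹).2 hw1 hw2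
      have h4 : g * h⁻¹ = τ' := Subtype.coe_injective (h3.trans hτ'.symm)
      exact rcoset_eq_of_mem (mem_rcoset_of_mul_inv_mem (h4 ▸ Subgroup.mem_zpowers τ'))
  -- choice of coset representatives
  have hex1 : ∀ v : Fin n, ∃ g : Subgroup.closure ({σ, τ} : Set (Equiv.Perm ℕ)), (g : Equiv.Perm ℕ)⁻¹ n = v.val + 1 := by
    intro v
    obtain ⟨g, hg, hgn⟩ := trans_point hn hσ hC (v.val + 1) (by omega) (by omega)
    exact ⟨⟨g, hg⟩, hgn⟩
  have hex2 : ∀ e : (SimpleGraph.completeGraph (Fin n)).edgeSet, ∃ g : Subgroup.closure ({σ, τ} : Set (Equiv.Perm ℕ)),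
      feD n hn g = (e : Sym2 (Fin n)) := by
    rintro ⟨e, he⟩
    revert he
    induction e using Sym2.ind with
    | _ x y =>
      intro he
      rw [SimpleGraph.mem_edgeSet] at he
      have hxy : x ≠ y := he.ne
      have hv : x.val + 1 ≠ y.val + 1 := fun h => hxy (Fin.ext (by omega))
      obtain ⟨g, hg, h1, h2⟩ := trans_pair hn hσ hC (x.val + 1) (y.val + 1)
        (by omega) (by omega) (by omega) (by omega) hv
      refine ⟨⟨g, hg⟩, ?_⟩
      show feD n hn g = s(x, y)
      rw [feD, h1, h2, finOf_succ, finOf_succ]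
  choose gv hgv using hex1
  choose ge hge using hex2
  -- the bijection
  set F : (Fin n ⊕ (SimpleGraph.completeGraph (Fin n)).edgeSet) → GVert ({σ', τ'} : Set (Subgroup.closure ({σ, τ} : Set (Equiv.Perm ℕ)))) :=
    Sum.elim (fun v => cVert hsS (gv v)) (fun e => cVert htS (ge e)) with hF
  have hinj : Function.Injective F := by
    intro a b hab
    rcases a with v | e <;> rcases b with w | f <;>
      rw [hF] at hab <;> simp only [Sum.elim_inl, Sum.elim_inr] at hab
    · have h1 := hA _ _ ((cVert_eq_iff hsS _ _).mp hab)
      rw [hgv, hgv] at h1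
      exact congrArg Sum.inl (Fin.ext (by omega))
    · exact absurd hab (cVert_ne hne hsS htS _ _)
    · exact absurd hab (cVert_ne (Ne.symm hne) htS hsS _ _)
    · have h1 := hB _ _ ((cVert_eq_iff htS _ _).mp hab)
      rw [hge, hge] at h1
      exact congrArg Sum.inr (Subtype.ext h1)
  have hsurj : Function.Surjective F := by
    rintro ⟨⟨s, C⟩, hs, x, hCx⟩
    simp only [Set.mem_insert_iff, Set.mem_singleton_iff] at hs
    rcases hs with rfl | rfl
    · refine ⟨Sum.inl (finOf n hn ((x : Equiv.Perm ℕ)⁻¹ n)), ?_⟩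
      rw [hF]; simp only [Sum.elim_inl]
      apply Subtype.ext
      show (s, rcoset (Subgroup.zpowers s) (gv _)) = (s, C)
      have hCx' : C = rcoset (Subgroup.zpowers s) x := hCx
      have hv : (x : Equiv.Perm ℕ)⁻¹ n = ((gv (finOf n hn ((x : Equiv.Perm ℕ)⁻¹ n)) :
          Equiv.Perm ℕ))⁻¹ n := by
        rw [hgv, finOf_val hn (hr1 x).1 (hr1 x).2]
        have := hr1 x; omega
      rw [hCx', rcoset_eq_of_mem (hA' x _ hv)]
    · have hne2 : (x : Equiv.Perm ℕ)⁻¹ n ≠ (x : Equiv.Perm ℕ)⁻¹ (n - 1) := by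
        intro h
        have := ((x : Equiv.Perm ℕ))⁻¹.injective h
        omega
      have he0 : feD n hn x ∈ (SimpleGraph.completeGraph (Fin n)).edgeSet := by
        rw [feD, SimpleGraph.mem_edgeSet, SimpleGraph.completeGraph_eq_top, SimpleGraph.top_adj]
        intro h
        exact hne2 (finOf_inj hn (hr1 x).1 (hr1 x).2 (hr2 x).1 (hr2 x).2 h)
      refine ⟨Sum.inr ⟨feD n hn x, he0⟩, ?_⟩
      rw [hF]; simp only [Sum.elim_inr]
      apply Subtype.ext
      show (s, rcoset (Subgroup.zpowers s) (ge _)) = (s, C)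
      have hCx' : C = rcoset (Subgroup.zpowers s) x := hCx
      rw [hCx', hB' (ge ⟨feD n hn x, he0⟩) x (by rw [hge])]
  -- the central adjacency computation
  have hcross : ∀ (v : Fin n) (e : (SimpleGraph.completeGraph (Fin n)).edgeSet),
      (rcoset (Subgroup.zpowers σ') (gv v) ∩ rcoset (Subgroup.zpowers τ') (ge e)).Nonempty ↔
        v ∈ (e : Sym2 (Fin n)) := by
    intro v e
    constructor
    · rintro ⟨z, hz1, hz2⟩
      have hz3 : (z : Equiv.Perm ℕ)⁻¹ n = (gv v : Equiv.Perm ℕ)⁻¹ n :=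
        hA z (gv v) (rcoset_eq_of_mem hz1)
      have hz4 : feD n hn z = feD n hn (ge e) := hB z (ge e) (rcoset_eq_of_mem hz2)
      rw [hge] at hz4
      rw [← hz4, feD]
      have hv : finOf n hn ((z : Equiv.Perm ℕ)⁻¹ n) = v := by
        rw [hz3, hgv, finOf_succ]
      rw [← hv]
      exact Sym2.mem_mk_left _ _
    · intro hv
      have he : (e : Sym2 (Fin n)) = feD n hn (ge e) := (hge e).symm
      rw [he, feD, Sym2.mem_iff] at hv
      rcases hv with hv | hv
      · have h1 : (gv v : Equiv.Perm ℕ)⁻¹ n = (ge e : Equiv.Perm ℕ)⁻¹ n := by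
          rw [hgv]
          have := congrArg Fin.val hv
          rw [finOf_val hn (hr1 (ge e)).1 (hr1 (ge e)).2] at this
          have := hr1 (ge e)
          omega
        exact ⟨ge e, hA' (gv v) (ge e) h1, mem_rcoset_self _ _⟩
      · have h1 : (gv v : Equiv.Perm ℕ)⁻¹ n = ((τ' * ge e : _) : Equiv.Perm ℕ)⁻¹ n := by
          have hco : ((τ' * ge e : _) : Equiv.Perm ℕ)⁻¹ =
              (ge e : Equiv.Perm ℕ)⁻¹ * τ⁻¹ := by
            push_cast; rw [hτ', mul_inv_rev]
          rw [hco, Equiv.Perm.mul_apply, tau_inv hn hσ hC, tau_n hn hσ hC, hgv]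
          have := congrArg Fin.val hv
          rw [finOf_val hn (hr2 (ge e)).1 (hr2 (ge e)).2] at this
          have := hr2 (ge e)
          omega
        refine ⟨τ' * ge e, hA' (gv v) _ h1, τ', Subgroup.mem_zpowers τ', rfl⟩
  have hadj : ∀ a b, (cosetGraph ({σ', τ'} : Set (Subgroup.closure ({σ, τ} : Set (Equiv.Perm ℕ))))).Adj (F a) (F b) ↔
      (incidenceGraph (SimpleGraph.completeGraph (Fin n))).Adj a b := by
    have hCadj : ∀ u w, (cosetGraph ({σ', τ'} :
          Set (Subgroup.closure ({σ, τ} : Set (Equiv.Perm ℕ))))).Adj u w ↔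
        u ≠ w ∧ ((u.1.2 ∩ w.1.2).Nonempty ∨ (w.1.2 ∩ u.1.2).Nonempty) :=
      fun u w => SimpleGraph.fromRel_adj _ u w
    have hIadj : ∀ x y, (incidenceGraph (SimpleGraph.completeGraph (Fin n))).Adj x y ↔ x ≠ y ∧
        ((∃ v a', x = Sum.inl v ∧ y = Sum.inr a' ∧ v ∈ (a' : Sym2 (Fin n))) ∨
         (∃ v a', y = Sum.inl v ∧ x = Sum.inr a' ∧ v ∈ (a' : Sym2 (Fin n)))) :=
      fun x y => SimpleGraph.fromRel_adj _ x y
    intro a b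
    rcases a with v | e <;> rcases b with w | f
    · rw [hCadj, hIadj]
      constructor
      · rintro ⟨hne', h | h⟩ <;> rw [hF] at hne' h <;>
          simp only [Sum.elim_inl, cVert_snd] at h hne'
        · exact absurd ((cVert_eq_iff hsS _ _).mpr (rcoset_eq_of_inter h)) hne'
        · exact absurd ((cVert_eq_iff hsS _ _).mpr (rcoset_eq_of_inter h)).symm hne'
      · rintro ⟨hne', h | h⟩ <;> obtain ⟨v', a', h1, h2, -⟩ := h <;> exact (Sum.inl_ne_inr h2).elim
    · rw [hCadj, hIadj]
      constructor
      · rintro ⟨hne', h | h⟩ <;> rw [hF] at h <;>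
          simp only [Sum.elim_inl, Sum.elim_inr, cVert_snd] at h
        · exact ⟨by simp, Or.inl ⟨v, f, rfl, rfl, (hcross v f).mp h⟩⟩
        · rw [Set.inter_comm] at h
          exact ⟨by simp, Or.inl ⟨v, f, rfl, rfl, (hcross v f).mp h⟩⟩
      · rintro ⟨hne', h | h⟩
        · obtain ⟨v', a', h1, h2, hm⟩ := h
          injection h1 with h1; injection h2 with h2
          subst h1; subst h2
          refine ⟨?_, Or.inl ?_⟩
          · rw [hF]; simp only [Sum.elim_inl, Sum.elim_inr]
            exact cVert_ne hne hsS htS _ _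
          · rw [hF]; simp only [Sum.elim_inl, Sum.elim_inr, cVert_snd]
            exact (hcross v f).mpr hm
        · obtain ⟨v', a', h1, h2, -⟩ := h
          exact (Sum.inl_ne_inr h2).elim
    · rw [hCadj, hIadj]
      constructor
      · rintro ⟨hne', h | h⟩ <;> rw [hF] at h <;>
          simp only [Sum.elim_inl, Sum.elim_inr, cVert_snd] at h
        · rw [Set.inter_comm] at h
          exact ⟨by simp, Or.inr ⟨w, e, rfl, rfl, (hcross w e).mp h⟩⟩
        · exact ⟨by simp, Or.inr ⟨w, e, rfl, rfl, (hcross w e).mp h⟩⟩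
      · rintro ⟨hne', h | h⟩
        · obtain ⟨v', a', h1, h2, -⟩ := h
          exact (Sum.inr_ne_inl h1).elim
        · obtain ⟨v', a', h1, h2, hm⟩ := h
          injection h1 with h1; injection h2 with h2
          subst h1; subst h2
          refine ⟨?_, Or.inr ?_⟩
          · rw [hF]; simp only [Sum.elim_inl, Sum.elim_inr]
            exact cVert_ne (Ne.symm hne) htS hsS _ _
          · rw [hF]; simp only [Sum.elim_inl, Sum.elim_inr, cVert_snd]
            exact (hcross w e).mpr hm
    · rw [hCadj, hIadj]
      constructor
      · rintro ⟨hne', h | h⟩ <;> rw [hF] at hne' h <;>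
          simp only [Sum.elim_inr, cVert_snd] at h hne'
        · exact absurd ((cVert_eq_iff htS _ _).mpr (rcoset_eq_of_inter h)) hne'
        · exact absurd ((cVert_eq_iff htS _ _).mpr (rcoset_eq_of_inter h)).symm hne'
      · rintro ⟨hne', h | h⟩ <;> obtain ⟨v', a', h1, h2, -⟩ := h <;> exact (Sum.inr_ne_inl h1).elim
  exact ⟨⟨Equiv.ofBijective F ⟨hinj, hsurj⟩, fun {a b} => hadj a b⟩⟩
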